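/- Let A be a metrizable abelian topological group. Then the Pontryagin dual Â (with the compact-open topology) is a k-space: a subset F ⊆ Â is closed whenever F ∩ Ξ is closed in Ξ for every compact subset Ξ ⊆ Â. -/

import Mathlib

/-!
Translating by a point of the closure reduces the claim to: if `0 ∈ closure F` then `0 ∈ F`.
Since `Λ₁` is the closed `1/4`-ball of `T`, a homomorphism mapping a neighbourhood `U` into `Λ₁`
maps the smaller neighbourhood `{w | k • w ∈ U for k ≤ m}` into the `1/(4m)`-ball; so polars of
neighbourhoods are equicontinuous, hence compact by Arzelà–Ascoli, while polars of compact sets are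
neighbourhoods of `0` in `Â`. If `0 ∉ F`, fix a basis `U₀ = A, U₁, U₂, …` of neighbourhoods
of `0`. Compactness of `F ∩ U_{n+1}^▷` lets one choose finite sets `E_n ⊆ U_n` with
`(E₀ ∪ … ∪ E_n)^▷ ∩ F ∩ U_{n+1}^▷ = ∅`. Since `E_n → 0`, the set `S = {0} ∪ ⋃ E_n` is compact,
and `S^▷` is a neighbourhood of `0` disjoint from `F`: every character lies in some `U_n^▷`.
-/

open scoped Topology

noncomputable section

/-- The circle group `T = R/Z`. -/
abbrev Torus := AddCircle (1 : ℝ)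

/-- `Λ₁`, the image of `[-1/4, 1/4]` in `T = R/Z`. -/
def Lam : Set Torus := (fun x : ℝ => (x : Torus)) '' Set.Icc (-(1/4)) (1/4)

/-- The Pontryagin dual: continuous characters into `T = R/Z`, with the compact-open
topology (the topology on `ContinuousAddMonoidHom` is induced from `C(A, T)`). -/
abbrev PDual (A : Type*) [AddCommGroup A] [TopologicalSpace A] [IsTopologicalAddGroup A] :=
  ContinuousAddMonoidHom A Torus

/-- The polar `S^▷ = {χ ∈ Â : χ(S) ⊆ Λ₁}` of a subset `S ⊆ A`. -/
def polar {A : Type*} [AddCommGroup A] [TopologicalSpace A] [IsTopologicalAddGroup A]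
    (S : Set A) : Set (PDual A) := {χ | ∀ s ∈ S, χ s ∈ Lam}

/-- The prepolar `Φ^◁ = {a ∈ A : χ(a) ∈ Λ₁ for all χ ∈ Φ}` of a set `Φ ⊆ Â`. -/
def prepolar {A : Type*} [AddCommGroup A] [TopologicalSpace A] [IsTopologicalAddGroup A]
    (Φ : Set (PDual A)) : Set A := {a | ∀ χ ∈ Φ, χ a ∈ Lam}

/-- The evaluation homomorphism `α_A : A → Â̂`, `α_A(a)(χ) = χ(a)`. -/
def evalHom {A : Type*} [AddCommGroup A] [TopologicalSpace A] [IsTopologicalAddGroup A]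
    (a : A) : PDual (PDual A) where
  toFun := fun χ => χ a
  map_zero' := rfl
  map_add' := fun _ _ => rfl
  continuous_toFun := continuous_eval_const a


variable {A : Type*} [AddCommGroup A] [TopologicalSpace A] [IsTopologicalAddGroup A]

open Set Filter Metric

lemma exists_coe_eq_abs_eq_norm (x : Torus) : ∃ r : ℝ, (r : Torus) = x ∧ |r| = ‖x‖ := by
  obtain ⟨r, rfl⟩ := QuotientAddGroup.mk_surjective x
  refine ⟨r - round r, ?_, (UnitAddCircle.norm_eq).symm⟩
  simp

lemma norm_coe_eq_abs_of_abs_le {r : ℝ} (h : |r| ≤ 1 / 2) : ‖(r : Torus)‖ = |r| :=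
  (AddCircle.norm_coe_eq_abs_iff (p := 1) one_ne_zero).2 (by simpa using h)

lemma lam_eq_closedBall : Lam = closedBall (0 : Torus) (1 / 4) := by
  ext x
  rw [mem_closedBall_zero_iff]
  constructor
  · rintro ⟨r, hr, rfl⟩
    have hr : |r| ≤ 1 / 4 := abs_le.2 hr
    rw [norm_coe_eq_abs_of_abs_le (by linarith)]
    exact hr
  · intro hx
    obtain ⟨r, rfl, hr⟩ := exists_coe_eq_abs_eq_norm x
    exact ⟨r, abs_le.1 (hr ▸ hx), rfl⟩

lemma isClosed_lam : IsClosed Lam :=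
  lam_eq_closedBall ▸ isClosed_closedBall

lemma lam_mem_nhds : Lam ∈ 𝓝 (0 : Torus) :=
  lam_eq_closedBall ▸ closedBall_mem_nhds _ (by norm_num)

lemma norm_nsmul_of_mul_norm_le {x : Torus} {n : ℕ} (h : n * ‖x‖ ≤ 1 / 2) :
    ‖n • x‖ = n * ‖x‖ := by
  obtain ⟨r, rfl, hr⟩ := exists_coe_eq_abs_eq_norm x
  have hnr : |n * r| = n * ‖(r : Torus)‖ := by rw [abs_mul, Nat.abs_cast, hr]
  rw [← AddCircle.coe_nsmul, nsmul_eq_mul, norm_coe_eq_abs_of_abs_le (hnr ▸ h), hnr]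

lemma mul_norm_le_of_forall_nsmul_mem_lam {x : Torus} {m : ℕ} (h : ∀ k ≤ m, k • x ∈ Lam) :
    m * ‖x‖ ≤ 1 / 4 := by
  simp only [lam_eq_closedBall, mem_closedBall_zero_iff] at h
  induction m with
  | zero => simp
  | succ m ih =>
    have hm : m * ‖x‖ ≤ 1 / 4 := ih fun k hk => h k (hk.trans m.le_succ)
    have hx : ‖x‖ ≤ 1 / 4 := by simpa using h 1 (by omega)
    have hmx : ((m + 1 : ℕ) : ℝ) * ‖x‖ ≤ 1 / 2 := by push_cast; linarith
    rw [← norm_nsmul_of_mul_norm_le hmx]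
    exact h (m + 1) le_rfl

lemma exists_forall_nsmul_mem_lam_imp_norm_lt {ε : ℝ} (hε : 0 < ε) :
    ∃ m : ℕ, ∀ x : Torus, (∀ k ≤ m, k • x ∈ Lam) → ‖x‖ < ε := by
  obtain ⟨m, hm⟩ := exists_nat_gt (1 / (4 * ε))
  refine ⟨m, fun x hx => ?_⟩
  have hm' : 1 / 4 < m * ε := by
    rw [div_lt_iff₀ (by positivity)] at hm
    linarith
  exact lt_of_mul_lt_mul_left ((mul_norm_le_of_forall_nsmul_mem_lam hx).trans_lt hm')
    m.cast_nonneg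

lemma eq_zero_of_forall_nsmul_mem_lam {x : Torus} (h : ∀ k : ℕ, k • x ∈ Lam) : x = 0 :=
  eq_of_forall_dist_le fun ε hε => by
    obtain ⟨m, hm⟩ := exists_forall_nsmul_mem_lam_imp_norm_lt hε
    exact (dist_zero_right x).trans_le (hm x fun k _ => h k).le

theorem isCompact_insert_iUnion_of_tendsto_smallSets {X : Type*} [TopologicalSpace X] {x : X}
    {E : ℕ → Set X} (hfin : ∀ n, (E n).Finite) (hE : Tendsto E atTop (𝓝 x).smallSets) :
    IsCompact (insert x (⋃ n, E n)) := by
  have hrange : range (fun i : Σ n, E n => (i.2 : X)) = ⋃ n, E n := by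
    simp [range_sigma_eq_iUnion_range]
  rw [← hrange]
  refine Tendsto.isCompact_insert_range_of_cofinite fun O hO => ?_
  obtain ⟨N, hN⟩ := eventually_atTop.1 (tendsto_smallSets_iff.1 hE O hO)
  have hfinN : (⋃ n ∈ Iio N, range fun e : E n => (⟨n, e⟩ : Σ n, E n)).Finite :=
    (finite_Iio N).biUnion fun n _ => @finite_range _ _ _ (hfin n).to_subtype
  refine mem_cofinite.2 (hfinN.subset fun i hi => mem_biUnion ?_ ⟨i.2, rfl⟩)
  by_contra h
  exact hi (hN i.1 (not_lt.1 h) i.2.2)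

theorem ContinuousAddMonoidHom.isCompact_setOf_mapsTo {X Y : Type*} [TopologicalSpace X]
    [AddGroup X] [IsTopologicalAddGroup X] [UniformSpace Y] [AddGroup Y] [IsUniformAddGroup Y]
    [T2Space Y] [CompactSpace Y] {U : Set X} {V : Set Y} (hV : IsClosed V)
    (h : EquicontinuousAt (fun f : {f : X →+ Y | MapsTo f U V} ↦ (f : X → Y)) 0) :
    IsCompact {f : ContinuousAddMonoidHom X Y | MapsTo f U V} := by
  have hequi := equicontinuous_of_equicontinuousAt_zero _ h
  have hcoe : ContinuousMap.toFun '' (toContinuousMap '' {f | MapsTo f U V}) =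
      pi U (fun _ => V) ∩ range ((↑) : (X →+ Y) → X → Y) := by
    ext g
    constructor
    · rintro ⟨-, ⟨f, hf, rfl⟩, rfl⟩
      exact ⟨hf, f.toAddMonoidHom, rfl⟩
    · rintro ⟨hg, f, rfl⟩
      have hf : Continuous f := hequi.continuous ⟨f, hg⟩
      exact ⟨_, ⟨⟨f, hf⟩, hg, rfl⟩, rfl⟩
  rw [(isInducing_toContinuousMap X Y).isCompact_iff]
  refine ArzelaAscoli.isCompact_of_equicontinuous _ ?_ ?_
  · rw [hcoe]
    exact ((isClosed_set_pi fun _ _ => hV).inter (AddMonoidHom.isClosed_range_coe X Y)).isCompact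
  · rw [equicontinuous_iff_range] at hequi ⊢
    refine hequi.mono ?_
    rintro _ ⟨⟨-, f, hf, rfl⟩, rfl⟩
    exact ⟨⟨f.toAddMonoidHom, hf⟩, rfl⟩

theorem ContinuousAddMonoidHom.setOf_mapsTo_mem_nhds_zero {X Y : Type*} [TopologicalSpace X]
    [AddMonoid X] [TopologicalSpace Y] [AddMonoid Y] {K : Set X} (hK : IsCompact K) {V : Set Y}
    (hV : V ∈ 𝓝 0) :
    {f : ContinuousAddMonoidHom X Y | MapsTo f K V} ∈ 𝓝 0 := by
  obtain ⟨W, hWV, hWo, hW0⟩ := mem_nhds_iff.1 hV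
  rw [(isInducing_toContinuousMap X Y).nhds_eq_comap]
  exact ⟨_, (ContinuousMap.isOpen_setOfPred_mapsTo hK hWo).mem_nhds fun _ _ => hW0,
    fun f hf => hf.mono_right hWV⟩

theorem Homeomorph.isClosed_preimage_inter_of_isCompact {X Y : Type*} [TopologicalSpace X]
    [TopologicalSpace Y] (h : X ≃ₜ Y) {F : Set Y} (hF : ∀ K, IsCompact K → IsClosed (F ∩ K))
    {K : Set X} (hK : IsCompact K) : IsClosed (h ⁻¹' F ∩ K) := by
  rw [← h.preimage_image K, ← preimage_inter]
  exact (hF _ (hK.image h.continuous)).preimage h.continuous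

lemma equicontinuousAt_zero_setOf_mapsTo_lam {M : Type*} [TopologicalSpace M] [AddMonoid M]
    [ContinuousAdd M] {U : Set M} (hU : U ∈ 𝓝 0) :
    EquicontinuousAt (fun f : {f : M →+ Torus | MapsTo f U Lam} ↦ (f : M → Torus)) 0 := by
  rw [Metric.equicontinuousAt_iff_right]
  intro ε hε
  obtain ⟨m, hm⟩ := exists_forall_nsmul_mem_lam_imp_norm_lt hε
  have hmul : ∀ᶠ w in 𝓝 (0 : M), ∀ k ∈ Iic m, k • w ∈ U :=
    (eventually_all_finite (finite_Iic m)).2 fun k _ =>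
      (continuous_nsmul k).tendsto' 0 0 (nsmul_zero k) hU
  filter_upwards [hmul] with w hw f
  rw [map_zero, dist_zero_left]
  exact hm _ fun k hk => map_nsmul f.1 k w ▸ f.2 (hw k hk)

lemma polar_eq_biInter (S : Set A) : polar S = ⋂ s ∈ S, (fun χ : PDual A => χ s) ⁻¹' Lam := by
  ext χ
  simp [polar]

lemma isClosed_polar (S : Set A) : IsClosed (polar S) := by
  rw [polar_eq_biInter]
  exact isClosed_biInter fun s _ =>
    isClosed_lam.preimage (continuous_eval_const s)

lemma polar_anti {S T : Set A} (h : S ⊆ T) : polar T ⊆ polar S :=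
  fun _ hχ s hs => hχ s (h hs)

lemma polar_union (S T : Set A) : polar (S ∪ T) = polar S ∩ polar T := by
  simp only [polar_eq_biInter, biInter_union]

lemma polar_univ : polar (univ : Set A) = {0} := by
  refine subset_antisymm (fun χ hχ => ?_) ?_
  · ext a
    exact eq_zero_of_forall_nsmul_mem_lam fun k => map_nsmul χ k a ▸ hχ _ (mem_univ _)
  · rintro _ rfl _ _
    exact mem_of_mem_nhds lam_mem_nhds

lemma isCompact_polar {U : Set A} (hU : U ∈ 𝓝 0) : IsCompact (polar U) :=
  ContinuousAddMonoidHom.isCompact_setOf_mapsTo isClosed_lam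
    (equicontinuousAt_zero_setOf_mapsTo_lam hU)

lemma polar_mem_nhds {K : Set A} (hK : IsCompact K) : polar K ∈ 𝓝 (0 : PDual A) :=
  ContinuousAddMonoidHom.setOf_mapsTo_mem_nhds_zero hK lam_mem_nhds

lemma IsCompact.exists_finite_inter_polar_eq_empty {K : Set (PDual A)} (hK : IsCompact K)
    {U : Set A} (h : K ∩ polar U = ∅) : ∃ E ⊆ U, E.Finite ∧ K ∩ polar E = ∅ := by
  rw [polar_eq_biInter, biInter_eq_iInter] at h
  obtain ⟨t, ht⟩ := hK.elim_finite_subfamily_closed _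
    (fun u : U => isClosed_lam.preimage (continuous_eval_const u.1)) h
  refine ⟨(↑) '' (t : Set U), by simp, t.finite_toSet.image _, ?_⟩
  rwa [polar_eq_biInter, biInter_image]

section Construction

variable {F : Set (PDual A)}

lemma exists_finite_polar_union_inter_eq_empty
    (hF : ∀ Ξ : Set (PDual A), IsCompact Ξ → IsClosed (F ∩ Ξ)) {B U U' : Set A}
    (hU' : U' ∈ 𝓝 0) (h : polar B ∩ F ∩ polar U = ∅) :
    ∃ E ⊆ U, E.Finite ∧ polar (B ∪ E) ∩ F ∩ polar U' = ∅ := by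
  have hK : IsCompact (polar B ∩ (F ∩ polar U')) :=
    ((isCompact_polar hU').of_isClosed_subset (hF _ (isCompact_polar hU'))
      inter_subset_right).inter_left (isClosed_polar B)
  obtain ⟨E, hEU, hEfin, hE⟩ := hK.exists_finite_inter_polar_eq_empty <|
    subset_empty_iff.1 fun χ ⟨⟨hB, hF, _⟩, hU⟩ => h.subset ⟨⟨hB, hF⟩, hU⟩
  refine ⟨E, hEU, hEfin, subset_empty_iff.1 fun χ ⟨⟨hBE, hF⟩, hU'⟩ => ?_⟩
  rw [polar_union] at hBE
  exact hE.subset ⟨⟨hBE.1, hF, hU'⟩, hBE.2⟩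

lemma exists_seq_finite_polar_biUnion_inter_eq_empty
    (hF : ∀ Ξ : Set (PDual A), IsCompact Ξ → IsClosed (F ∩ Ξ)) (h0F : (0 : PDual A) ∉ F)
    {U : ℕ → Set A} (hU0 : U 0 = univ) (hU : ∀ n, U n ∈ 𝓝 0) :
    ∃ E : ℕ → Set A, (∀ n, E n ⊆ U n ∧ (E n).Finite) ∧
      ∀ n, polar (⋃ k < n, E k) ∩ F ∩ polar (U n) = ∅ := by
  -- The hypothesis sits inside the `∃` so that `choose` yields a function of every `B`.
  have step : ∀ n (B : Set A), ∃ E, polar B ∩ F ∩ polar (U n) = ∅ →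
      E ⊆ U n ∧ E.Finite ∧ polar (B ∪ E) ∩ F ∩ polar (U (n + 1)) = ∅ := fun n B => by
    by_cases h : polar B ∩ F ∩ polar (U n) = ∅
    · obtain ⟨E, hE⟩ := exists_finite_polar_union_inter_eq_empty hF (hU (n + 1)) h
      exact ⟨E, fun _ => hE⟩
    · exact ⟨∅, fun h' => absurd h' h⟩
  choose E hE using step
  let B : ℕ → Set A := fun n => Nat.rec ∅ (fun k Bk => Bk ∪ E k Bk) n
  have hB : ∀ n, polar (B n) ∩ F ∩ polar (U n) = ∅ := by
    intro n
    induction n with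
    | zero =>
      refine subset_empty_iff.1 fun χ ⟨⟨_, hχF⟩, hχU⟩ => h0F ?_
      rw [hU0, polar_univ] at hχU
      exact hχU ▸ hχF
    | succ n ih => exact (hE n (B n) ih).2.2
  have hBE : ∀ n, ⋃ k < n, E k (B k) = B n := by
    intro n
    induction n with
    | zero => simp [B]
    | succ n ih => rw [biUnion_lt_succ, ih]
  exact ⟨fun n => E n (B n), fun n => ⟨(hE n _ (hB n)).1, (hE n _ (hB n)).2.1⟩,
    fun n => hBE n ▸ hB n⟩

lemma zero_mem_of_mem_closure [(𝓝 (0 : A)).IsCountablyGenerated]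
    (hF : ∀ Ξ : Set (PDual A), IsCompact Ξ → IsClosed (F ∩ Ξ))
    (h0 : (0 : PDual A) ∈ closure F) : (0 : PDual A) ∈ F := by
  by_contra h0F
  obtain ⟨V, hV⟩ := (𝓝 (0 : A)).exists_antitone_basis
  -- `U 0 = univ` starts the recursion: `polar univ = {0}` does not meet `F`.
  let U : ℕ → Set A := fun n => Nat.casesOn n univ V
  have hU : ∀ n, U n ∈ 𝓝 0 := by
    rintro (_ | n)
    exacts [univ_mem, hV.mem n]
  have hUsmall : Tendsto U atTop (𝓝 0).smallSets :=
    (tendsto_add_atTop_iff_nat 1).1 hV.tendsto_smallSets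
  obtain ⟨E, hE, hEF⟩ := exists_seq_finite_polar_biUnion_inter_eq_empty hF h0F rfl hU
  have hS : IsCompact (insert 0 (⋃ n, E n)) :=
    isCompact_insert_iUnion_of_tendsto_smallSets (fun n => (hE n).2)
      (hUsmall.smallSets_mono (Eventually.of_forall fun n => (hE n).1))
  obtain ⟨χ, hχS, hχF⟩ := mem_closure_iff_nhds.1 h0 _ (polar_mem_nhds hS)
  have hχU : ∀ᶠ n in atTop, χ ∈ polar (U n) := tendsto_smallSets_iff.1 hUsmall _
    ((map_continuous χ).tendsto' 0 0 (map_zero χ) lam_mem_nhds)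
  obtain ⟨n, hn⟩ := hχU.exists
  have hχE : χ ∈ polar (⋃ k < n, E k) :=
    polar_anti ((iUnion₂_subset fun k _ => subset_iUnion E k).trans (subset_insert _ _)) hχS
  exact (hEF n).subset ⟨⟨hχE, hχF⟩, hn⟩

end Construction

/-- For a metrizable abelian topological group `A`, the Pontryagin dual `Â` is a
k-space: a subset `F ⊆ Â` is closed whenever `F ∩ Ξ` is closed for every compact
`Ξ ⊆ Â`. -/
theorem dual_kSpace [TopologicalSpace.MetrizableSpace A] :
    ∀ F : Set (PDual A),
      (∀ Ξ : Set (PDual A), IsCompact Ξ → IsClosed (F ∩ Ξ)) → IsClosed F := by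
  intro F hF
  refine isClosed_of_closure_subset fun χ₀ hχ₀ => ?_
  let τ := Homeomorph.addRight χ₀
  have h0 : (0 : PDual A) ∈ closure (τ ⁻¹' F) := by
    rw [← τ.preimage_closure]
    simpa [τ] using hχ₀
  have hτF : ∀ Ξ, IsCompact Ξ → IsClosed (τ ⁻¹' F ∩ Ξ) :=
    fun _ => τ.isClosed_preimage_inter_of_isCompact hF
  simpa [τ] using zero_mem_of_mem_closure hτF h0

end
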